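/- arXiv:0906.0221 — 3 statements merged into one kernel-verified Lean document; each statement's English description precedes it below -/
import Mathlib

section
/- Let g : Y → F be a function from a metric space to a Banach space, let a > 0 and b ≥ 2a. Then there exists a function g̃ : Y → F with modulus of continuity ω_{g̃} ≤ 3·ω_g such that g̃(y) = g(y) whenever ‖g(y)‖ ≤ a and g̃(y) = 0 whenever ‖g(y)‖ ≥ b. -/
open ENNReal

/-- Modulus of continuity: ω_g(ε) = sup{‖g y₁ - g y₂‖ : dist y₁ y₂ ≤ ε}, valued in [0,∞]. -/
noncomputable def modulus {Y F : Type*} [PseudoMetricSpace Y] [NormedAddCommGroup F]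
    (g : Y → F) (ε : ℝ) : ℝ≥0∞ :=
  ⨆ (p : Y × Y) (_ : dist p.1 p.2 ≤ ε), (‖g p.1 - g p.2‖₊ : ℝ≥0∞)

/-! The truncated map is `Φ ∘ g` with `Φ v = γ ‖v‖ • r v`, so it suffices that `Φ` is
3-Lipschitz. The radial retraction `r` onto the closed `a`-ball is 2-Lipschitz and bounded by `a`,
and `γ` is `(b - a)⁻¹`-Lipschitz and bounded by `1`; the Leibniz-type estimate for `γ • r` gives
the constant `1 * 2 + a / (b - a)`, which is at most `3` because `b ≥ 2a`. -/

open scoped NNReal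

theorem modulus_comp_le {Y E F : Type*} [PseudoMetricSpace Y] [NormedAddCommGroup E]
    [NormedAddCommGroup F] {K : ℝ≥0} {φ : E → F} (hφ : LipschitzWith K φ) (g : Y → E)
    (ε : ℝ) : modulus (φ ∘ g) ε ≤ K * modulus g ε := by
  rw [modulus, modulus, ENNReal.mul_iSup]
  refine iSup₂_le fun p hp => le_iSup_of_le p ?_
  rw [ENNReal.mul_iSup]
  refine le_iSup_of_le hp ?_
  show ‖φ (g p.1) - φ (g p.2)‖ₑ ≤ K * ‖g p.1 - g p.2‖ₑ
  simpa only [edist_eq_enorm_sub] using hφ.edist_le_mul (g p.1) (g p.2)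

theorem LipschitzWith.smul_of_norm_le {α 𝕜 E : Type*} [PseudoMetricSpace α] [NormedField 𝕜]
    [SeminormedAddCommGroup E] [NormedSpace 𝕜 E] {f : α → 𝕜} {g : α → E}
    {Kf Kg Mf Mg : ℝ≥0} (hf : LipschitzWith Kf f) (hg : LipschitzWith Kg g)
    (hfM : ∀ x, ‖f x‖ ≤ Mf) (hgM : ∀ x, ‖g x‖ ≤ Mg) :
    LipschitzWith (Mf * Kg + Kf * Mg) fun x => f x • g x := by
  refine LipschitzWith.of_dist_le_mul fun x y => ?_
  have hsplit : f x • g x - f y • g y = f x • (g x - g y) + (f x - f y) • g y := by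
    simp only [smul_sub, sub_smul]; abel
  rw [dist_eq_norm (f x • g x), hsplit]
  calc ‖f x • (g x - g y) + (f x - f y) • g y‖
      ≤ ‖f x‖ * ‖g x - g y‖ + ‖f x - f y‖ * ‖g y‖ :=
        norm_add_le_of_le (norm_smul _ _).le (norm_smul _ _).le
    _ ≤ Mf * (Kg * dist x y) + Kf * dist x y * Mg := by
        rw [← dist_eq_norm (g x), ← dist_eq_norm (f x)]
        gcongr
        exacts [hfM x, hg.dist_le_mul x y, hf.dist_le_mul x y, hgM y]
    _ = (Mf * Kg + Kf * Mg : ℝ≥0) * dist x y := by push_cast; ring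

section RadialRetraction

variable {E : Type*} [SeminormedAddCommGroup E] [NormedSpace ℝ E]

noncomputable def radialRetraction (a : ℝ) (v : E) : E := (a / max a ‖v‖) • v

theorem radialRetraction_of_norm_le {a : ℝ} (ha : 0 < a) {v : E} (h : ‖v‖ ≤ a) :
    radialRetraction a v = v := by
  rw [radialRetraction, max_eq_left h, div_self ha.ne', one_smul]

theorem norm_radialRetraction_le {a : ℝ} (ha : 0 < a) (v : E) :
    ‖radialRetraction a v‖ ≤ a := by
  have hM : 0 < max a ‖v‖ := lt_max_of_lt_left ha
  rw [radialRetraction, norm_smul, Real.norm_of_nonneg (by positivity), div_mul_eq_mul_div,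
    div_le_iff₀ hM]
  exact mul_le_mul_of_nonneg_left (le_max_right _ _) ha.le

theorem abs_div_max_sub_div_max_mul_le {a x y : ℝ} (ha : 0 < a) (hy : 0 ≤ y) :
    |a / max a x - a / max a y| * y ≤ |x - y| := by
  set Mu := max a x
  set Mv := max a y
  have hMu : 0 < Mu := lt_max_of_lt_left ha
  have hMv : 0 < Mv := lt_max_of_lt_left ha
  have hdiff : |Mv - Mu| ≤ |x - y| := by
    simpa only [Mu, Mv, max_comm a, abs_sub_comm y x] using abs_max_sub_max_le_abs y x a
  have hsub : a / Mu - a / Mv = a / Mu * (Mv - Mu) * Mv⁻¹ := by field_simp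
  rw [hsub, abs_mul, abs_mul, abs_of_pos (by positivity : 0 < a / Mu),
    abs_of_pos (inv_pos.2 hMv), mul_assoc, mul_assoc]
  have haMu : a / Mu ≤ 1 := div_le_one_of_le₀ (le_max_left _ _) hMu.le
  have hyMv : Mv⁻¹ * y ≤ 1 := inv_mul_le_one_of_le₀ (le_max_right _ _) hMv.le
  calc a / Mu * (|Mv - Mu| * (Mv⁻¹ * y)) ≤ 1 * (|Mv - Mu| * 1) := by gcongr
    _ ≤ |x - y| := by simpa using hdiff

theorem lipschitzWith_radialRetraction {a : ℝ} (ha : 0 < a) :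
    LipschitzWith 2 (radialRetraction a : E → E) := by
  refine LipschitzWith.of_dist_le_mul fun u v => ?_
  have hsplit : radialRetraction a u - radialRetraction a v =
      (a / max a ‖u‖) • (u - v) + (a / max a ‖u‖ - a / max a ‖v‖) • v := by
    simp only [radialRetraction, smul_sub, sub_smul]; abel
  rw [dist_eq_norm (radialRetraction a u), dist_eq_norm u, hsplit]
  calc ‖(a / max a ‖u‖) • (u - v) + (a / max a ‖u‖ - a / max a ‖v‖) • v‖
      ≤ |a / max a ‖u‖| * ‖u - v‖ + |a / max a ‖u‖ - a / max a ‖v‖| * ‖v‖ :=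
        norm_add_le_of_le (norm_smul _ _).le (norm_smul _ _).le
    _ ≤ 1 * ‖u - v‖ + ‖u - v‖ := by
        gcongr
        · rw [abs_of_nonneg (by positivity)]
          exact div_le_one_of_le₀ (le_max_left _ _) (ha.le.trans (le_max_left _ _))
        · exact (abs_div_max_sub_div_max_mul_le ha (norm_nonneg v)).trans
            (abs_norm_sub_norm_le u v)
    _ = (2 : ℝ≥0) * ‖u - v‖ := by push_cast; ring

end RadialRetraction

section Cutoff

-- The paper's piecewise linear `γ`, written as a clamp to `[0, 1]`.
noncomputable def cutoff (a b t : ℝ) : ℝ := max 0 (min 1 ((b - t) / (b - a)))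

theorem cutoff_eq_one_of_le {a b t : ℝ} (hab : a < b) (h : t ≤ a) : cutoff a b t = 1 := by
  have : 1 ≤ (b - t) / (b - a) := by rw [le_div_iff₀ (sub_pos.2 hab)]; linarith
  simp [cutoff, this]

theorem cutoff_eq_zero_of_le {a b t : ℝ} (hab : a ≤ b) (h : b ≤ t) : cutoff a b t = 0 := by
  have : (b - t) / (b - a) ≤ 0 := div_nonpos_of_nonpos_of_nonneg (by linarith) (by linarith)
  simp [cutoff, this]

theorem norm_cutoff_le_one (a b t : ℝ) : ‖cutoff a b t‖ ≤ 1 := by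
  rw [cutoff, Real.norm_of_nonneg (le_max_left _ _)]
  exact max_le zero_le_one (min_le_left _ _)

theorem lipschitzWith_cutoff {a b : ℝ} (hab : a ≤ b) :
    LipschitzWith (Real.toNNReal (b - a)⁻¹) (cutoff a b) := by
  have hlin : LipschitzWith (Real.toNNReal (b - a)⁻¹) fun t => (b - t) / (b - a) := by
    refine LipschitzWith.of_dist_le' fun s t => le_of_eq ?_
    have h : (b - s) / (b - a) - (b - t) / (b - a) = (b - a)⁻¹ * (t - s) := by ring
    rw [Real.dist_eq, Real.dist_eq, h, abs_mul, abs_of_nonneg (inv_nonneg.2 (sub_nonneg.2 hab)),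
      abs_sub_comm]
  exact (hlin.const_min 1).const_max 0

end Cutoff

section Truncation

variable {F : Type*} [NormedAddCommGroup F] [NormedSpace ℝ F]

noncomputable def truncation (a b : ℝ) (v : F) : F := cutoff a b ‖v‖ • radialRetraction a v

theorem truncation_of_norm_le {a b : ℝ} (ha : 0 < a) (hab : a < b) {v : F} (h : ‖v‖ ≤ a) :
    truncation a b v = v := by
  rw [truncation, cutoff_eq_one_of_le hab h, one_smul, radialRetraction_of_norm_le ha h]

theorem truncation_of_le_norm {a b : ℝ} (hab : a ≤ b) {v : F} (h : b ≤ ‖v‖) :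
    truncation a b v = 0 := by
  rw [truncation, cutoff_eq_zero_of_le hab h, zero_smul]

theorem lipschitzWith_truncation {a b : ℝ} (ha : 0 < a) (hb : 2 * a ≤ b) :
    LipschitzWith 3 (truncation a b : F → F) := by
  have hab : a ≤ b := by linarith
  have hba : 0 < b - a := by linarith
  have h := ((lipschitzWith_cutoff hab).comp lipschitzWith_one_norm).smul_of_norm_le
    (lipschitzWith_radialRetraction (E := F) ha) (Mf := 1) (Mg := a.toNNReal)
    (fun v => norm_cutoff_le_one a b ‖v‖)
    (fun v => (norm_radialRetraction_le ha v).trans_eq (Real.coe_toNNReal a ha.le).symm)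
  refine h.weaken ?_
  rw [← NNReal.coe_le_coe]
  push_cast
  rw [Real.coe_toNNReal _ (inv_nonneg.2 hba.le), Real.coe_toNNReal _ ha.le, mul_one]
  linarith [inv_mul_le_one_of_le₀ (by linarith : a ≤ b - a) hba.le]

end Truncation

theorem stmt2_general {Y F : Type*} [MetricSpace Y] [NormedAddCommGroup F] [NormedSpace ℝ F]
    (g : Y → F) (a b : ℝ) (ha : 0 < a) (hb : 2 * a ≤ b) :
    ∃ gt : Y → F,
      (∀ ε : ℝ, modulus gt ε ≤ 3 * modulus g ε) ∧
      (∀ y, ‖g y‖ ≤ a → gt y = g y) ∧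
      (∀ y, b ≤ ‖g y‖ → gt y = 0) := by
  refine ⟨truncation a b ∘ g, fun ε => ?_, fun y hy => truncation_of_norm_le ha (by linarith) hy,
    fun y hy => truncation_of_le_norm (by linarith) hy⟩
  simpa using modulus_comp_le (lipschitzWith_truncation ha hb) g ε

theorem stmt2 {Y F : Type*} [MetricSpace Y] [NormedAddCommGroup F] [NormedSpace ℝ F]
    [CompleteSpace F]
    (g : Y → F) (a b : ℝ) (ha : 0 < a) (hb : 2 * a ≤ b) :
    ∃ gt : Y → F,
      (∀ ε : ℝ, modulus gt ε ≤ 3 * modulus g ε) ∧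
      (∀ y, ‖g y‖ ≤ a → gt y = g y) ∧
      (∀ y, b ≤ ‖g y‖ → gt y = 0) :=
  stmt2_general g a b ha hb
end

section
/- Let (gₙ) be a sequence of functions from a set Y to a normed space F, (cₙ) a sequence of positive reals, and (y₁ⁿ), (y₂ⁿ) sequences in Y. Suppose supₙ ‖gₙ(y₁ⁿ) - gₙ(y₂ⁿ)‖/cₙ = ∞, for each m supₙ ‖gₘ(y₁ⁿ) - gₘ(y₂ⁿ)‖/cₙ = Lₘ < ∞, and sup over all m,n of ‖gₘ(y₁ⁿ) - gₘ(y₂ⁿ)‖ = C < ∞. Then there exists a nonnegative summable sequence (εₙ) such that whenever the pointwise sum g = Σ εₙ gₙ converges on {y₁ⁿ, y₂ⁿ : n ∈ ℕ}, one has supₙ ‖g(y₁ⁿ) - g(y₂ⁿ)‖/cₙ = ∞. -/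
/-!
Consider the operators `Tₙ ε = Σₘ εₘ (gₘ(y₁ⁿ) - gₘ(y₂ⁿ)) / cₙ` from `ℓ¹` to the completion of `F`;
they are bounded because `‖gₘ(y₁ⁿ) - gₘ(y₂ⁿ)‖ ≤ C`. If every nonnegative `ε ∈ ℓ¹` gave a bounded
sequence `‖Tₙ ε‖`, then so would every `ε = |ε| - (|ε| - ε)`, and the uniform boundedness principle
would bound `‖Tₙ‖`; but `‖Tₙ‖ ≥ ‖Tₙ eₙ‖ = ‖gₙ(y₁ⁿ) - gₙ(y₂ⁿ)‖ / cₙ` is unbounded.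
-/

open UniformSpace

namespace lp

section

variable {ι : Type*} {E : ι → Type*} [∀ i, NormedAddCommGroup (E i)]

theorem summable_norm_of_one (x : lp E 1) : Summable fun i => ‖x i‖ := by
  simpa using (memℓp_gen_iff (p := 1) (by simp)).1 (lp.memℓp x)

theorem norm_eq_tsum_norm_of_one (x : lp E 1) : ‖x‖ = ∑' i, ‖x i‖ := by
  simpa using lp.norm_eq_tsum_rpow (p := 1) (by simp) x

end

section

variable {ι E : Type*} [NormedAddCommGroup E] [NormedSpace ℝ E] [CompleteSpace E]
  {v : ι → E} {C : ℝ}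

theorem summable_smul_of_norm_le (hv : ∀ i, ‖v i‖ ≤ C) (x : lp (fun _ : ι => ℝ) 1) :
    Summable fun i => x i • v i :=
  .of_norm_bounded ((summable_norm_of_one x).mul_right C) fun i => by
    rw [norm_smul]; exact mul_le_mul_of_nonneg_left (hv i) (norm_nonneg _)

noncomputable def sumSMulCLM (v : ι → E) (C : ℝ) (hv : ∀ i, ‖v i‖ ≤ C) :
    lp (fun _ : ι => ℝ) 1 →L[ℝ] E :=
  LinearMap.mkContinuous
    { toFun x := ∑' i, x i • v i
      map_add' x y := by
        simp only [lp.coeFn_add, Pi.add_apply, add_smul]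
        exact (summable_smul_of_norm_le hv x).tsum_add (summable_smul_of_norm_le hv y)
      map_smul' a x := by
        simp only [lp.coeFn_smul, Pi.smul_apply, smul_eq_mul, mul_smul, RingHom.id_apply]
        exact Summable.tsum_const_smul a (summable_smul_of_norm_le hv x) }
    C fun x => by
      rw [norm_eq_tsum_norm_of_one, ← tsum_mul_left]
      refine tsum_of_norm_bounded ((summable_norm_of_one x).mul_left C).hasSum fun i => ?_
      rw [norm_smul, mul_comm C]
      exact mul_le_mul_of_nonneg_left (hv i) (norm_nonneg _)

theorem sumSMulCLM_apply (hv : ∀ i, ‖v i‖ ≤ C) (x : lp (fun _ : ι => ℝ) 1) :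
    sumSMulCLM v C hv x = ∑' i, x i • v i := rfl

theorem norm_le_opNorm_sumSMulCLM (hv : ∀ i, ‖v i‖ ≤ C) (i : ι) :
    ‖v i‖ ≤ ‖sumSMulCLM v C hv‖ := by
  classical
  have h := (sumSMulCLM v C hv).le_opNorm (lp.single 1 i 1)
  rwa [lp.norm_single (by norm_num), norm_one, mul_one, sumSMulCLM_apply,
    tsum_eq_single i fun j hj => by simp [hj], lp.single_apply_self, one_smul] at h

end

end lp

theorem exists_nonneg_summable_forall_hasSum_unbounded {ι ι' F : Type*} [NormedAddCommGroup F]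
    [NormedSpace ℝ F] (w : ι' → ι → F) (B : ι' → ℝ) (hB : ∀ n m, ‖w n m‖ ≤ B n)
    (hw : ∀ M : ℝ, ∃ n m, M < ‖w n m‖) :
    ∃ ε : ι → ℝ, (∀ m, 0 ≤ ε m) ∧ Summable ε ∧
      ∀ s : ι' → F, (∀ n, HasSum (fun m => ε m • w n m) (s n)) → ∀ M : ℝ, ∃ n, M < ‖s n‖ := by
  by_contra! h
  have hB' (n : ι') (m : ι) : ‖(w n m : Completion F)‖ ≤ B n := by
    rw [Completion.norm_coe]; exact hB n m
  -- `F` need not be complete, so the series are summed in its completion.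
  set T : ι' → lp (fun _ : ι => ℝ) 1 →L[ℝ] Completion F := fun n =>
    lp.sumSMulCLM (fun m => (w n m : Completion F)) (B n) (hB' n) with hT
  have hT_apply (x : lp (fun _ : ι => ℝ) 1) {s : ι' → F}
      (hs : ∀ n, HasSum (fun m => x m • w n m) (s n)) (n : ι') : T n x = s n := by
    rw [hT, lp.sumSMulCLM_apply]
    simpa using ((Completion.toComplL (𝕜 := ℝ)).hasSum (hs n)).tsum_eq
  -- Writing `x = |x| - (|x| - x)` reduces pointwise boundedness to nonnegative coefficients.
  have hT_bdd (x : lp (fun _ : ι => ℝ) 1) : ∃ M, ∀ n, ‖T n x‖ ≤ M := by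
    have hx := lp.summable_norm_of_one x
    obtain ⟨s₁, hs₁, M₁, hM₁⟩ := h (fun m => |x m|) (fun m => abs_nonneg _) hx
    obtain ⟨s₂, hs₂, M₂, hM₂⟩ := h (fun m => |x m| - x m) (fun m => sub_nonneg.2 (le_abs_self _))
      (hx.sub hx.of_norm)
    have hs (n : ι') : HasSum (fun m => x m • w n m) (s₁ n - s₂ n) := by
      convert (hs₁ n).sub (hs₂ n) using 1
      ext m
      rw [← sub_smul, sub_sub_cancel]
    refine ⟨M₁ + M₂, fun n => ?_⟩
    rw [hT_apply x hs, Completion.norm_coe]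
    exact (norm_sub_le _ _).trans (add_le_add (hM₁ n) (hM₂ n))
  obtain ⟨C, hC⟩ := banach_steinhaus hT_bdd
  obtain ⟨n, m, hnm⟩ := hw C
  have hle := lp.norm_le_opNorm_sumSMulCLM (hB' n) m
  rw [Completion.norm_coe] at hle
  exact hnm.not_ge (hle.trans (hC n))

theorem stmt10_general {Y F : Type*} [NormedAddCommGroup F] [NormedSpace ℝ F]
    (g : ℕ → Y → F) (c : ℕ → ℝ) (hc : ∀ n, 0 < c n)
    (y₁ y₂ : ℕ → Y)
    (hsup : ∀ M : ℝ, ∃ n, M < ‖g n (y₁ n) - g n (y₂ n)‖ / c n)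
    (hC : ∃ C : ℝ, ∀ m n, ‖g m (y₁ n) - g m (y₂ n)‖ ≤ C) :
    ∃ ε : ℕ → ℝ, (∀ n, 0 ≤ ε n) ∧ Summable ε ∧
      ∀ G : Y → F,
        (∀ y : Y, (∃ n, y = y₁ n ∨ y = y₂ n) → HasSum (fun n => ε n • g n y) (G y)) →
        ∀ M : ℝ, ∃ n, M < ‖G (y₁ n) - G (y₂ n)‖ / c n := by
  obtain ⟨C, hC⟩ := hC
  have norm_inv_smul (n : ℕ) (v : F) : ‖(c n)⁻¹ • v‖ = ‖v‖ / c n := by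
    rw [norm_smul, norm_inv, Real.norm_of_nonneg (hc n).le, inv_mul_eq_div]
  obtain ⟨ε, hε_nonneg, hε_summable, hε⟩ := exists_nonneg_summable_forall_hasSum_unbounded
    (fun n m => (c n)⁻¹ • (g m (y₁ n) - g m (y₂ n))) (fun n => C / c n)
    (fun n m => by rw [norm_inv_smul]; exact div_le_div_of_nonneg_right (hC m n) (hc n).le)
    (fun M => (hsup M).imp fun n hn => ⟨n, by rwa [norm_inv_smul]⟩)
  refine ⟨ε, hε_nonneg, hε_summable, fun G hG M => ?_⟩
  have hG_sub (n : ℕ) : HasSum (fun m => ε m • (c n)⁻¹ • (g m (y₁ n) - g m (y₂ n)))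
      ((c n)⁻¹ • (G (y₁ n) - G (y₂ n))) := by
    simpa only [smul_comm (ε _), smul_sub] using
      ((hG _ ⟨n, .inl rfl⟩).sub (hG _ ⟨n, .inr rfl⟩)).const_smul (c n)⁻¹
  simpa only [norm_inv_smul] using hε _ hG_sub M

theorem stmt10 {Y F : Type*} [NormedAddCommGroup F] [NormedSpace ℝ F]
    (g : ℕ → Y → F) (c : ℕ → ℝ) (hc : ∀ n, 0 < c n)
    (y₁ y₂ : ℕ → Y)
    (hsup : ∀ M : ℝ, ∃ n, M < ‖g n (y₁ n) - g n (y₂ n)‖ / c n)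
    (hL : ∀ m : ℕ, ∃ L : ℝ, ∀ n, ‖g m (y₁ n) - g m (y₂ n)‖ / c n ≤ L)
    (hC : ∃ C : ℝ, ∀ m n, ‖g m (y₁ n) - g m (y₂ n)‖ ≤ C) :
    ∃ ε : ℕ → ℝ, (∀ n, 0 ≤ ε n) ∧ Summable ε ∧
      ∀ G : Y → F,
        (∀ y : Y, (∃ n, y = y₁ n ∨ y = y₂ n) → HasSum (fun n => ε n • g n y) (G y)) →
        ∀ M : ℝ, ∃ n, M < ‖G (y₁ n) - G (y₂ n)‖ / c n :=
  stmt10_general g c hc y₁ y₂ hsup hC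
end

section
/- Let (Kₙ) be a sequence of positive reals, (Lₘ) and C nonnegative reals with supₙ Kₙ = ∞, and (cₙ) positive reals. Then there exist indices n₁ < n₂ < ⋯ and a summable sequence of positive reals (ε_{n_k}) such that ε_{n_k}·K_{n_k} ≥ max(3·Σ_{m<k} ε_{n_m}·L_{n_m}, k) and 3C·Σ_{m>k} ε_{n_m} ≤ ε_{n_k}·K_{n_k}·c_{n_k} for all k. -/
theorem stmt15 (K : ℕ → ℝ) (hKpos : ∀ n, 0 < K n)
    (hKsup : ∀ M : ℝ, ∃ n, M < K n)
    (L : ℕ → ℝ) (hL : ∀ n, 0 ≤ L n) (C : ℝ) (hC : 0 ≤ C)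
    (c : ℕ → ℝ) (hcpos : ∀ n, 0 < c n) :
    ∃ (nk : ℕ → ℕ) (ε : ℕ → ℝ), StrictMono nk ∧ (∀ k, 0 < ε k) ∧ Summable ε ∧
      ∀ k : ℕ,
        max (3 * ∑ m ∈ Finset.range k, ε m * L (nk m)) (k : ℝ) ≤ ε k * K (nk k) ∧
        3 * C * (∑' m : ℕ, if k < m then ε m else 0) ≤ ε k * K (nk k) * c (nk k) := by
  classical
  let pick : ℝ → ℕ := fun M => (hKsup M).choose
  have hpick : ∀ M, M < K (pick M) := fun M => (hKsup M).choose_spec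
  let δof : ℕ × ℝ × ℝ → ℝ := fun s =>
    min (s.2.1 / 2) (s.2.1 * K s.1 * c s.1 / (3 * C + 1) / 2)
  let Mof : ℕ → ℕ × ℝ × ℝ → ℝ := fun k s =>
    max ((max (3 * s.2.2) ((k : ℝ) + 1)) / δof s)
      ((Finset.range (s.1 + 1)).sup' ⟨0, by simp⟩ K)
  let step : ℕ → ℕ × ℝ × ℝ → ℕ × ℝ × ℝ := fun k s =>
    (pick (Mof k s), δof s, s.2.2 + δof s * L (pick (Mof k s)))
  let σ : ℕ → ℕ × ℝ × ℝ := fun k => Nat.rec ((0 : ℕ), (1 : ℝ), L 0) step k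
  let nk : ℕ → ℕ := fun k => (σ k).1
  let ε : ℕ → ℝ := fun k => (σ k).2.1
  have hε0 : ε 0 = 1 := rfl
  have hεs : ∀ k, ε (k + 1) = δof (σ k) := fun k => rfl
  have hns : ∀ k, nk (k + 1) = pick (Mof k (σ k)) := fun k => rfl
  have hSs : ∀ k, (σ (k + 1)).2.2 = (σ k).2.2 + ε (k + 1) * L (nk (k + 1)) := fun k => rfl
  have hCpos : (0 : ℝ) < 3 * C + 1 := by linarith
  have hεpos : ∀ k, 0 < ε k := by
    intro k
    induction k with
    | zero => rw [hε0]; norm_num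
    | succ k ih =>
      rw [hεs k]
      have ih' : 0 < (σ k).2.1 := ih
      have h1 := hKpos (σ k).1
      have h2 := hcpos (σ k).1
      refine lt_min (by linarith) ?_
      positivity
  have hδpos : ∀ k, 0 < δof (σ k) := fun k => (hεs k) ▸ hεpos (k + 1)
  have hgrow : ∀ k, max (3 * (σ k).2.2) ((k : ℝ) + 1) ≤ ε (k + 1) * K (nk (k + 1)) := by
    intro k
    have h1 := hpick (Mof k (σ k))
    have h2 : (max (3 * (σ k).2.2) ((k : ℝ) + 1)) / δof (σ k) ≤ Mof k (σ k) :=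
      le_max_left _ _
    have h3 := hδpos k
    have h4 : (max (3 * (σ k).2.2) ((k : ℝ) + 1)) / δof (σ k) < K (pick (Mof k (σ k))) :=
      lt_of_le_of_lt h2 h1
    rw [div_lt_iff₀ h3] at h4
    rw [mul_comm (K _) (δof _)] at h4
    rw [hεs k, hns k]
    exact h4.le
  have hmono : ∀ k, nk k < nk (k + 1) := by
    intro k
    by_contra h
    push_neg at h
    have h1 := hpick (Mof k (σ k))
    have h2 : K (nk (k + 1)) ≤ (Finset.range ((σ k).1 + 1)).sup' ⟨0, by simp⟩ K :=
      Finset.le_sup' K (Finset.mem_range.2 (Nat.lt_succ_of_le h))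
    have h3 : (Finset.range ((σ k).1 + 1)).sup' ⟨0, by simp⟩ K ≤ Mof k (σ k) :=
      le_max_right _ _
    rw [hns k] at h2
    linarith
  have hS : ∀ k, (σ k).2.2 = ∑ m ∈ Finset.range (k + 1), ε m * L (nk m) := by
    intro k
    induction k with
    | zero =>
      rw [Finset.sum_range_one, hε0, one_mul]
      rfl
    | succ k ih =>
      rw [hSs k, ih, Finset.sum_range_succ _ (k + 1)]
  have hhalf : ∀ k, ε (k + 1) ≤ ε k / 2 := fun k => by
    rw [hεs k]; exact min_le_left _ _
  have hBnd : ∀ k, ε (k + 1) ≤ ε k * K (nk k) * c (nk k) / (3 * C + 1) / 2 := fun k => by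
    rw [hεs k]; exact min_le_right _ _
  have hgeom : ∀ k j, ε (k + j) ≤ ε k * (1 / 2) ^ j := by
    intro k j
    induction j with
    | zero => simp
    | succ j ih =>
      have h := hhalf (k + j)
      show ε ((k + j) + 1) ≤ ε k * (1 / 2) ^ (j + 1)
      rw [pow_succ]
      nlinarith [hεpos (k + j)]
  have hsum : Summable ε := by
    apply Summable.of_nonneg_of_le (fun m => (hεpos m).le) (fun m => ?_)
      summable_geometric_two
    have := hgeom 0 m
    simpa [hε0] using this
  have htail : ∀ k, (∑' m : ℕ, if k < m then ε m else 0) ≤ 2 * ε (k + 1) := by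
    intro k
    have hf : Summable (fun m => if k < m then ε m else 0) := by
      apply Summable.of_nonneg_of_le (fun m => ?_) (fun m => ?_) hsum
      · split
        · exact (hεpos m).le
        · exact le_rfl
      · split
        · exact le_rfl
        · exact (hεpos m).le
    have hg : Summable (fun m => if m ≤ k then ε m else 0) :=
      summable_of_ne_finset_zero (s := Finset.range (k + 1)) (fun m hm => by
        simp only [Finset.mem_range, Nat.lt_succ_iff] at hm
        simp [hm])
    have hsplit : ∀ m, ε m = (if k < m then ε m else 0) + (if m ≤ k then ε m else 0) := by
      intro m
      rcases lt_or_ge k m with h | h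
      · simp [h, Nat.not_le.2 h]
      · simp [h, Nat.not_lt.2 h]
    have h1 : ∑' m, ε m
        = (∑' m, (if k < m then ε m else 0)) + ∑' m, (if m ≤ k then ε m else 0) := by
      rw [← Summable.tsum_add hf hg]
      exact tsum_congr hsplit
    have h2 : (∑' m, (if m ≤ k then ε m else 0)) = ∑ m ∈ Finset.range (k + 1), ε m := by
      rw [tsum_eq_sum (s := Finset.range (k + 1)) (fun m hm => by
        simp only [Finset.mem_range, Nat.lt_succ_iff] at hm
        simp [hm])]
      exact Finset.sum_congr rfl (fun m hm => by
        simp only [Finset.mem_range, Nat.lt_succ_iff] at hm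
        simp [hm])
    have h3 := Summable.sum_add_tsum_nat_add (k + 1) hsum
    have h4 : (∑' m, (if k < m then ε m else 0)) = ∑' j, ε (j + (k + 1)) := by linarith
    rw [h4]
    have h5 : ∀ j, ε (j + (k + 1)) ≤ ε (k + 1) * (1 / 2) ^ j := fun j => by
      have := hgeom (k + 1) j
      rwa [Nat.add_comm] at this
    have h6 : Summable (fun j => ε (j + (k + 1))) := (summable_nat_add_iff (k + 1)).2 hsum
    calc (∑' j, ε (j + (k + 1))) ≤ ∑' j, ε (k + 1) * (1 / 2) ^ j :=
          Summable.tsum_le_tsum h5 h6 (summable_geometric_two.mul_left (ε (k + 1)))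
      _ = ε (k + 1) * 2 := by rw [tsum_mul_left, tsum_geometric_two]
      _ = 2 * ε (k + 1) := by ring
  refine ⟨nk, ε, strictMono_nat_of_lt_succ hmono, hεpos, hsum, fun k => ⟨?_, ?_⟩⟩
  · cases k with
    | zero =>
      simp only [Finset.range_zero, Finset.sum_empty, mul_zero, Nat.cast_zero, max_self]
      have h1 := hεpos 0
      have h2 := hKpos (nk 0)
      positivity
    | succ k =>
      have h := hgrow k
      rw [hS k] at h
      push_cast
      exact h
  · have hT := htail k
    have hB := hBnd k
    have hP : 0 ≤ ε k * K (nk k) * c (nk k) := by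
      have := hεpos k
      have := hKpos (nk k)
      have := hcpos (nk k)
      positivity
    have h2 : 2 * ε (k + 1) ≤ ε k * K (nk k) * c (nk k) / (3 * C + 1) := by linarith
    have hTnn : 0 ≤ (∑' m : ℕ, if k < m then ε m else 0) :=
      tsum_nonneg (fun m => by
        split
        · exact (hεpos m).le
        · exact le_rfl)
    have h3 : 3 * C * (∑' m : ℕ, if k < m then ε m else 0)
        ≤ 3 * C * (ε k * K (nk k) * c (nk k) / (3 * C + 1)) :=
      mul_le_mul_of_nonneg_left (hT.trans h2) (by linarith)
    have hQ : ε k * K (nk k) * c (nk k) / (3 * C + 1) * (3 * C + 1)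
        = ε k * K (nk k) * c (nk k) := div_mul_cancel₀ _ (ne_of_gt hCpos)
    have hQnn : 0 ≤ ε k * K (nk k) * c (nk k) / (3 * C + 1) := div_nonneg hP hCpos.le
    nlinarith [h3, hQ, hQnn, hC]
end
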